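/- For every x > 0, 0 < x(log x − Ψ(x)) ≤ 1, where Ψ is the digamma function. -/

import Mathlib

open Real

/-!
Since `log Γ` is convex on `(0, ∞)` and `log Γ (y + 1) - log Γ y = log y`, its derivative at
`x + 1` lies between its slopes over `[x, x + 1]` and `[x + 1, x + 2]`, i.e.
`log x ≤ Ψ(x + 1) ≤ log (x + 1)`. With `Ψ(x + 1) = Ψ(x) + 1/x` this gives
`log x - 1/x ≤ Ψ(x) ≤ log (x + 1) - 1/x < log x`, the last step being `log (1 + 1/x) < 1/x`.
-/

/-- The digamma function `Ψ = Γ'/Γ`, as the derivative of `log ∘ Γ`. -/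
noncomputable def digamma (x : ℝ) : ℝ := deriv (fun y => log (Gamma y)) x

lemma log_Gamma_add_one {x : ℝ} (hx : 0 < x) :
    log (Gamma (x + 1)) = log (Gamma x) + log x := by
  rw [Gamma_add_one hx.ne', log_mul hx.ne' (Gamma_pos_of_pos hx).ne', add_comm]

lemma slope_log_Gamma_add_one {x : ℝ} (hx : 0 < x) :
    slope (log ∘ Gamma) x (x + 1) = log x := by
  rw [slope_def_field, Function.comp_apply, Function.comp_apply, log_Gamma_add_one hx]
  ring

lemma differentiableAt_log_Gamma {x : ℝ} (hx : 0 < x) :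
    DifferentiableAt ℝ (fun y => log (Gamma y)) x :=
  (differentiableAt_Gamma fun m => (neg_nonpos.mpr m.cast_nonneg).trans_lt hx |>.ne').log
    (Gamma_pos_of_pos hx).ne'

lemma digamma_add_one {x : ℝ} (hx : 0 < x) : digamma (x + 1) = digamma x + x⁻¹ := by
  have h_eq : (fun y => log (Gamma (y + 1))) =ᶠ[nhds x] fun y => log (Gamma y) + log y := by
    filter_upwards [eventually_gt_nhds hx] with y hy using log_Gamma_add_one hy
  rw [digamma, ← deriv_comp_add_const, h_eq.deriv_eq,
    deriv_fun_add (differentiableAt_log_Gamma hx) (differentiableAt_log hx.ne'), deriv_log]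
  rfl

lemma log_le_digamma_add_one {x : ℝ} (hx : 0 < x) : log x ≤ digamma (x + 1) := by
  have hx₁ : 0 < x + 1 := by linarith
  rw [← slope_log_Gamma_add_one hx]
  exact convexOn_log_Gamma.slope_le_deriv hx hx₁ (lt_add_one x) (differentiableAt_log_Gamma hx₁)

lemma digamma_add_one_le_log_add_one {x : ℝ} (hx : 0 < x) :
    digamma (x + 1) ≤ log (x + 1) := by
  have hx₁ : 0 < x + 1 := by linarith
  rw [← slope_log_Gamma_add_one hx₁]
  exact convexOn_log_Gamma.deriv_le_slope hx₁ (by linarith : (0 : ℝ) < x + 1 + 1)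
    (lt_add_one _) (differentiableAt_log_Gamma hx₁)

lemma log_add_one_sub_log_lt_inv {x : ℝ} (hx : 0 < x) : log (x + 1) - log x < x⁻¹ := by
  have h_ratio : (x + 1) / x = 1 + x⁻¹ := by field_simp
  rw [← log_div (by linarith) hx.ne', h_ratio]
  simpa using log_lt_sub_one_of_pos (x := 1 + x⁻¹) (by positivity) (by simpa using hx.ne')

lemma log_sub_inv_le_digamma {x : ℝ} (hx : 0 < x) : log x - x⁻¹ ≤ digamma x := by
  linarith [log_le_digamma_add_one hx, digamma_add_one hx]

lemma digamma_lt_log {x : ℝ} (hx : 0 < x) : digamma x < log x := by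
  linarith [digamma_add_one_le_log_add_one hx, digamma_add_one hx, log_add_one_sub_log_lt_inv hx]

/-- For every `x > 0`, `0 < x (log x − Ψ(x)) ≤ 1`. -/
theorem digamma_log_bound (x : ℝ) (hx : 0 < x) :
    0 < x * (log x - digamma x) ∧ x * (log x - digamma x) ≤ 1 := by
  refine ⟨mul_pos hx (sub_pos.mpr (digamma_lt_log hx)), ?_⟩
  calc x * (log x - digamma x) ≤ x * x⁻¹ := by
        gcongr; linarith [log_sub_inv_le_digamma hx]
    _ = 1 := mul_inv_cancel₀ hx.ne'
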